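/- arXiv:1705.01503 — 3 statements merged into one kernel-verified Lean document; each statement's English description precedes it below -/
import Mathlib

section
/- For the Gauss-Lobatto quadrature of degree N with weights wⱼ and the associated Lagrange differentiation matrix D (D_{ij} = l'_j(ξ_i)), the summation-by-parts property holds: for all polynomials U, V of degree at most N, ⟨U_ξ, V⟩_N + ⟨U, V_ξ⟩_N = U(1)V(1) − U(−1)V(−1), where ⟨U,V⟩_N = Σⱼ wⱼ U(ξⱼ)V(ξⱼ). -/
open MeasureTheory

/-- Summation-by-parts property of the Gauss-Lobatto quadrature (exact for degree ≤ 2N-1,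
with nodes including ±1): `⟨U_ξ,V⟩_N + ⟨U,V_ξ⟩_N = U(1)V(1) - U(-1)V(-1)` for `U,V ∈ 𝒫^N`. -/
theorem stmt_6 (N : ℕ) (hN : 1 ≤ N) (ξ w : Fin (N + 1) → ℝ)
    (hξ0 : ξ 0 = -1) (hξN : ξ (Fin.last N) = 1)
    (hexact : ∀ p : Polynomial ℝ, p.natDegree ≤ 2 * N - 1 →
      ∑ j, w j * p.eval (ξ j) = ∫ x in (-1:ℝ)..1, p.eval x) :
    ∀ U V : Polynomial ℝ, U.natDegree ≤ N → V.natDegree ≤ N →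
      (∑ j, w j * ((Polynomial.derivative U).eval (ξ j) * V.eval (ξ j)))
        + (∑ j, w j * (U.eval (ξ j) * (Polynomial.derivative V).eval (ξ j)))
      = U.eval 1 * V.eval 1 - U.eval (-1) * V.eval (-1) := by
  intro U V hU hV
  have hdeg : (Polynomial.derivative (U * V)).natDegree ≤ 2 * N - 1 := by
    calc (Polynomial.derivative (U * V)).natDegree ≤ (U * V).natDegree - 1 :=
          Polynomial.natDegree_derivative_le _
      _ ≤ (U.natDegree + V.natDegree) - 1 :=
          Nat.sub_le_sub_right (Polynomial.natDegree_mul_le) 1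
      _ ≤ 2 * N - 1 := by omega
  have key := hexact _ hdeg
  have hsum : (∑ j, w j * ((Polynomial.derivative U).eval (ξ j) * V.eval (ξ j)))
        + (∑ j, w j * (U.eval (ξ j) * (Polynomial.derivative V).eval (ξ j)))
      = ∑ j, w j * (Polynomial.derivative (U * V)).eval (ξ j) := by
    rw [← Finset.sum_add_distrib]
    congr 1; funext j
    simp [Polynomial.derivative_mul]; ring
  have hint : (∫ x in (-1:ℝ)..1, (Polynomial.derivative (U * V)).eval x)
      = (U * V).eval 1 - (U * V).eval (-1) := by
    have : ∀ x ∈ Set.uIcc (-1:ℝ) 1, HasDerivAt (fun y => (U * V).eval y)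
        ((Polynomial.derivative (U * V)).eval x) x := fun x _ =>
      (U * V).hasDerivAt x
    rw [intervalIntegral.integral_eq_sub_of_hasDerivAt this
      ((Polynomial.derivative (U * V)).continuous.intervalIntegrable _ _)]
  rw [hsum, key, hint, Polynomial.eval_mul, Polynomial.eval_mul]
end

section
/- In matrix form, the summation-by-parts property of the Gauss-Lobatto DGSEM reads: M D + Dᵀ M = B, where M = diag(w₀,...,w_N) is the mass matrix, D is the differentiation matrix, and B = diag(−1, 0, ..., 0, 1). -/
open MeasureTheory

lemma poly_integral_deriv (p : Polynomial ℝ) :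
    ∫ x in (-1:ℝ)..1, (Polynomial.derivative p).eval x = p.eval 1 - p.eval (-1) :=
  intervalIntegral.integral_deriv_eq_sub' (fun x => p.eval x)
    (funext fun _ => p.deriv)
    (fun _ _ => p.differentiableAt)
    ((Polynomial.derivative p).continuous.continuousOn)

/-- Matrix form of the summation-by-parts property of the Gauss-Lobatto DGSEM:
`M D + Dᵀ M = B` with `M = diag(w)`, `D` the differentiation matrix of the Lagrange
basis at the nodes, and `B = diag(-1,0,…,0,1)`. -/
theorem stmt_8 (N : ℕ) (hN : 1 ≤ N) (ξ w : Fin (N + 1) → ℝ)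
    (hinj : Function.Injective ξ)
    (hξ0 : ξ 0 = -1) (hξN : ξ (Fin.last N) = 1)
    (hexact : ∀ p : Polynomial ℝ, p.natDegree ≤ 2 * N - 1 →
      ∑ j, w j * p.eval (ξ j) = ∫ x in (-1:ℝ)..1, p.eval x)
    (D : Matrix (Fin (N + 1)) (Fin (N + 1)) ℝ)
    (hD : ∀ i j, D i j = (Polynomial.derivative (Lagrange.basis Finset.univ ξ j)).eval (ξ i)) :
    Matrix.diagonal w * D + D.transpose * Matrix.diagonal w =
      Matrix.diagonal (fun j => if j = 0 then (-1 : ℝ) else if j = Fin.last N then 1 else 0) := by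
  have hinjOn : Set.InjOn ξ (Finset.univ : Finset (Fin (N+1))) := fun a _ b _ h => hinj h
  set L : Fin (N+1) → Polynomial ℝ := fun i => Lagrange.basis Finset.univ ξ i with hL
  have hdeg : ∀ i, (L i).natDegree = N := by
    intro i
    simp [hL, Lagrange.natDegree_basis hinjOn (Finset.mem_univ i)]
  have heval : ∀ i k, (L i).eval (ξ k) = if k = i then 1 else 0 := by
    intro i k
    by_cases h : k = i
    · simp [h, hL, Lagrange.eval_basis_self hinjOn (Finset.mem_univ i)]
    · simp [h, hL, Lagrange.eval_basis_of_ne (Ne.symm h) (Finset.mem_univ k)]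
  have h0last : (0 : Fin (N+1)) ≠ Fin.last N := by
    simp [Fin.ext_iff, Fin.last]; omega
  have key : ∀ i j, w j * (Polynomial.derivative (L i)).eval (ξ j)
      + w i * (Polynomial.derivative (L j)).eval (ξ i)
      = (if i = Fin.last N then (1:ℝ) else 0) * (if j = Fin.last N then 1 else 0)
        - (if i = 0 then (1:ℝ) else 0) * (if j = 0 then 1 else 0) := by
    intro i j
    have hdegp : (Polynomial.derivative (L i * L j)).natDegree ≤ 2 * N - 1 := by
      calc (Polynomial.derivative (L i * L j)).natDegree
          ≤ (L i * L j).natDegree - 1 := Polynomial.natDegree_derivative_le _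
        _ ≤ ((L i).natDegree + (L j).natDegree) - 1 :=
            Nat.sub_le_sub_right (Polynomial.natDegree_mul_le) 1
        _ = 2 * N - 1 := by rw [hdeg, hdeg]; ring_nf
    have h1 := hexact _ hdegp
    rw [poly_integral_deriv] at h1
    have e1 : (L i * L j).eval 1
        = (if i = Fin.last N then (1:ℝ) else 0) * (if j = Fin.last N then 1 else 0) := by
      have hi := heval i (Fin.last N); have hj := heval j (Fin.last N)
      rw [hξN] at hi hj
      rw [Polynomial.eval_mul, hi, hj]
      simp [eq_comm]
    have e0 : (L i * L j).eval (-1)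
        = (if i = 0 then (1:ℝ) else 0) * (if j = 0 then 1 else 0) := by
      have hi := heval i 0; have hj := heval j 0
      rw [hξ0] at hi hj
      rw [Polynomial.eval_mul, hi, hj]
      simp [eq_comm]
    have h2 : ∑ k, w k * (Polynomial.derivative (L i * L j)).eval (ξ k)
        = w j * (Polynomial.derivative (L i)).eval (ξ j)
          + w i * (Polynomial.derivative (L j)).eval (ξ i) := by
      have hterm : ∀ k, w k * (Polynomial.derivative (L i * L j)).eval (ξ k)
          = (if k = j then w j * (Polynomial.derivative (L i)).eval (ξ j) else 0)
            + (if k = i then w i * (Polynomial.derivative (L j)).eval (ξ i) else 0) := by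
        intro k
        rw [Polynomial.derivative_mul]
        simp only [Polynomial.eval_add, Polynomial.eval_mul, heval]
        rcases eq_or_ne k j with rfl | hkj
        · rcases eq_or_ne k i with rfl | hki
          · simp; ring
          · simp [hki]
        · rcases eq_or_ne k i with rfl | hki
          · simp [hkj]
          · simp [hkj, hki]
      simp_rw [hterm, Finset.sum_add_distrib, Finset.sum_ite_eq' Finset.univ,
        Finset.mem_univ, if_true]
    rw [h2, e1, e0] at h1
    exact h1
  ext i j
  simp only [Matrix.add_apply, Matrix.diagonal_mul, Matrix.mul_diagonal,
    Matrix.transpose_apply, Matrix.diagonal_apply]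
  rw [hD i j, hD j i]
  have hkey := key j i
  have hiff : ((if j = Fin.last N then (1:ℝ) else 0) * (if i = Fin.last N then 1 else 0))
      - ((if j = 0 then (1:ℝ) else 0) * (if i = 0 then 1 else 0))
      = if i = j then (if i = 0 then (-1:ℝ) else if i = Fin.last N then 1 else 0) else 0 := by
    split_ifs <;> simp_all
  show w i * Polynomial.eval (ξ i) (Polynomial.derivative (L j))
      + Polynomial.eval (ξ j) (Polynomial.derivative (L i)) * w j = _
  rw [← hiff, ← hkey]; ring
end

section
/- The aliasing (product-rule defect) term of the Gauss-Lobatto DGSEM, 𝓛(A,U) = ⟨ I^N[A_ξ U] + I^N[A U_ξ] − (I^N[A U])_ξ , U⟩_{a,N}, can be written in matrix form as 𝓛(A,U) = {U}ᵀ A M (A_ξ + A D − D A) {U}, and hence is bounded by 𝓛(A,U) ≤ γ ‖U‖_{a,N}², where γ is the a-norm operator norm of A M (A_ξ + A D − D A). -/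
open Matrix

/-- The aliasing (product-rule defect) term
`𝓛(A,U) = ⟨I^N[A_ξ U] + I^N[A U_ξ] - (I^N[AU])_ξ, U⟩_{a,N}` (expressed nodally) equals the
matrix form `{U}ᵀ A M (A_ξ + A D - D A){U}`, and is bounded by `γ ‖U‖_{a,N}²` where `γ` is
the a-norm operator norm (supremum of the Rayleigh quotient) of `A M (A_ξ + A D - D A)`. -/
theorem stmt_11 (N : ℕ) (w A : Fin (N + 1) → ℝ)
    (hw : ∀ j, 0 < w j) (hA : ∀ j, 0 < A j)
    (D : Matrix (Fin (N + 1)) (Fin (N + 1)) ℝ)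
    (Ax : Fin (N + 1) → ℝ) (hAx : Ax = D.mulVec A)
    (γ : ℝ)
    (hγ : γ = sSup {c : ℝ | ∃ V : Fin (N + 1) → ℝ, V ≠ 0 ∧
      c = (∑ j, w j * A j *
            ((Ax j * V j + A j * D.mulVec V j - D.mulVec (fun k => A k * V k) j) * V j)) /
          (∑ j, w j * A j * (V j) ^ 2)}) :
    ∀ U : Fin (N + 1) → ℝ,
      (∑ j, w j * A j *
          ((Ax j * U j + A j * D.mulVec U j - D.mulVec (fun k => A k * U k) j) * U j))
        = U ⬝ᵥ ((Matrix.diagonal A * Matrix.diagonal w *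
            (Matrix.diagonal Ax + Matrix.diagonal A * D - D * Matrix.diagonal A)).mulVec U) ∧
      (∑ j, w j * A j *
          ((Ax j * U j + A j * D.mulVec U j - D.mulVec (fun k => A k * U k) j) * U j))
        ≤ γ * ∑ j, w j * A j * (U j) ^ 2 := by
  set E : Matrix (Fin (N + 1)) (Fin (N + 1)) ℝ :=
    Matrix.diagonal Ax + Matrix.diagonal A * D - D * Matrix.diagonal A with hE
  -- nodal expression equals E acting on V, pointwise
  have hnode : ∀ (V : Fin (N + 1) → ℝ) (j : Fin (N + 1)),
      Ax j * V j + A j * D.mulVec V j - D.mulVec (fun k => A k * V k) j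
        = E.mulVec V j := by
    intro V j
    have h1 : (fun k => A k * V k) = (Matrix.diagonal A).mulVec V := by
      funext k; rw [Matrix.mulVec_diagonal]
    rw [hE, Matrix.sub_mulVec, Matrix.add_mulVec, ← Matrix.mulVec_mulVec,
      ← Matrix.mulVec_mulVec, h1]
    simp [← Matrix.mulVec_mulVec, Matrix.mulVec_diagonal]
  -- Q as a double sum
  have hQ : ∀ V : Fin (N + 1) → ℝ,
      (∑ j, w j * A j *
          ((Ax j * V j + A j * D.mulVec V j - D.mulVec (fun k => A k * V k) j) * V j))
        = ∑ j, ∑ k, (w j * A j * E j k) * (V k * V j) := by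
    intro V
    refine Finset.sum_congr rfl fun j _ => ?_
    rw [hnode V j, Matrix.mulVec]
    simp only [dotProduct, Finset.sum_mul, Finset.mul_sum]
    refine Finset.sum_congr rfl fun k _ => by ring
  intro U
  constructor
  · -- matrix identity
    have : (Matrix.diagonal A * Matrix.diagonal w * E).mulVec U
        = fun j => A j * (w j * E.mulVec U j) := by
      funext j
      rw [← Matrix.mulVec_mulVec, ← Matrix.mulVec_mulVec, Matrix.mulVec_diagonal,
        Matrix.mulVec_diagonal]
    rw [this, dotProduct]
    refine Finset.sum_congr rfl fun j _ => ?_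
    rw [hnode U j]; ring
  · -- the bound
    by_cases hU : U = 0
    · subst hU; simp
    · set S : (Fin (N + 1) → ℝ) → ℝ := fun V => ∑ j, (V j) ^ 2 with hS
      set P : (Fin (N + 1) → ℝ) → ℝ := fun V => ∑ j, w j * A j * (V j) ^ 2 with hP
      set Q : (Fin (N + 1) → ℝ) → ℝ := fun V =>
        ∑ j, w j * A j *
          ((Ax j * V j + A j * D.mulVec V j - D.mulVec (fun k => A k * V k) j) * V j) with hQdef
      have hSnonneg : ∀ V, 0 ≤ S V := fun V => Finset.sum_nonneg fun j _ => sq_nonneg _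
      have hSsq : ∀ (V : Fin (N + 1) → ℝ) (j : Fin (N + 1)), (V j) ^ 2 ≤ S V := by
        intro V j
        exact Finset.single_le_sum (fun i _ => sq_nonneg (V i)) (Finset.mem_univ j)
      set C : ℝ := ∑ j, ∑ k, |w j * A j * E j k| with hC
      have hCnonneg : 0 ≤ C :=
        Finset.sum_nonneg fun j _ => Finset.sum_nonneg fun k _ => abs_nonneg _
      have hQle : ∀ V, Q V ≤ C * S V := by
        intro V
        rw [hQdef]
        simp only
        rw [hQ V, hC, Finset.sum_mul]
        refine Finset.sum_le_sum fun j _ => ?_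
        rw [Finset.sum_mul]
        refine Finset.sum_le_sum fun k _ => ?_
        have h1 : (w j * A j * E j k) * (V k * V j) ≤ |w j * A j * E j k| * |V k * V j| := by
          calc (w j * A j * E j k) * (V k * V j) ≤ |(w j * A j * E j k) * (V k * V j)| :=
                le_abs_self _
            _ = |w j * A j * E j k| * |V k * V j| := abs_mul _ _
        refine h1.trans ?_
        refine mul_le_mul_of_nonneg_left ?_ (abs_nonneg _)
        have hk := hSsq V k
        have hj := hSsq V j
        rw [abs_mul]
        nlinarith [sq_nonneg (|V k| - |V j|), sq_abs (V k), sq_abs (V j), abs_nonneg (V k),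
          abs_nonneg (V j)]
      set m : ℝ := Finset.univ.inf' Finset.univ_nonempty (fun j => w j * A j) with hm
      have hmpos : 0 < m := by
        rw [hm, Finset.lt_inf'_iff]
        intro j _; exact mul_pos (hw j) (hA j)
      have hmle : ∀ j, m ≤ w j * A j := fun j =>
        Finset.inf'_le _ (Finset.mem_univ j)
      have hPge : ∀ V, m * S V ≤ P V := by
        intro V
        rw [hP, hS]
        simp only
        rw [Finset.mul_sum]
        exact Finset.sum_le_sum fun j _ =>
          mul_le_mul_of_nonneg_right (hmle j) (sq_nonneg _)
      have hPpos : ∀ V : Fin (N + 1) → ℝ, V ≠ 0 → 0 < P V := by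
        intro V hV
        obtain ⟨j, hj⟩ : ∃ j, V j ≠ 0 := by
          by_contra h
          push_neg at h
          exact hV (funext h)
        refine Finset.sum_pos' (fun i _ => ?_) ⟨j, Finset.mem_univ j, ?_⟩
        · exact mul_nonneg (mul_pos (hw i) (hA i)).le (sq_nonneg _)
        · exact mul_pos (mul_pos (hw j) (hA j)) (by positivity)
      -- boundedness of the Rayleigh set
      have hbdd : BddAbove {c : ℝ | ∃ V : Fin (N + 1) → ℝ, V ≠ 0 ∧
          c = (∑ j, w j * A j *
              ((Ax j * V j + A j * D.mulVec V j - D.mulVec (fun k => A k * V k) j) * V j)) /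
            (∑ j, w j * A j * (V j) ^ 2)} := by
        refine ⟨C / m, ?_⟩
        rintro c ⟨V, hV, rfl⟩
        have hPV : 0 < P V := hPpos V hV
        rw [div_le_div_iff₀ hPV hmpos]
        have h1 : Q V ≤ C * S V := hQle V
        have h2 : m * S V ≤ P V := hPge V
        have h3 : 0 ≤ S V := hSnonneg V
        nlinarith [hQle V, hPge V, hSnonneg V, hCnonneg, hmpos]
      have hmem : Q U / P U ∈ {c : ℝ | ∃ V : Fin (N + 1) → ℝ, V ≠ 0 ∧
          c = (∑ j, w j * A j *
              ((Ax j * V j + A j * D.mulVec V j - D.mulVec (fun k => A k * V k) j) * V j)) /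
            (∑ j, w j * A j * (V j) ^ 2)} := ⟨U, hU, rfl⟩
      have hle : Q U / P U ≤ γ := hγ ▸ le_csSup hbdd hmem
      have hPU : 0 < P U := hPpos U hU
      calc Q U = (Q U / P U) * P U := by field_simp
        _ ≤ γ * P U := mul_le_mul_of_nonneg_right hle hPU.le
end
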